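/- arXiv:1611.04184 — 6 statements merged into one kernel-verified Lean document; each statement's English description precedes it below -/
import Mathlib

section
/- Let p_1 ≤ ... ≤ p_k be in [0,1] and (T^1,...,T^k) follow the multimaximal coupling distribution. Then for any pair of indices i < j, Pr[T^i = T^j = 1] = p_i = min{p_i, p_j}, i.e., each pair (T^i, T^j) is a maximal coupling of binary variables with marginal success probabilities p_i and p_j. -/
/-- The multimaximal coupling distribution on `{-1,1}^k` (encoded as
`Fin k → Bool`, `true` ↔ 1) of `k` binary random variables with success
probabilities `p 0 ≤ p 1 ≤ … ≤ p (k-1)`: the vector with `-1` in the first `l`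
coordinates and `1` in the rest gets probability `p l - p (l-1)` (reading
`p (-1) = 0` and `p k = 1`), and every non-monotone vector gets probability 0. -/
def mmDist {k : ℕ} (p : Fin k → ℝ) (f : Fin k → Bool) : ℝ :=
  if ∀ i j : Fin k, i ≤ j → f i = true → f j = true then
    (fun l : ℕ =>
      (if h : l < k then p ⟨l, h⟩ else 1) -
      (if l = 0 then 0 else if h : l - 1 < k then p ⟨l - 1, h⟩ else 1))
      ((Finset.univ.filter (fun i => f i = false)).card)
  else 0

lemma mm_tele {k : ℕ} (p : Fin k → ℝ) (n : ℕ) :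
    ∑ l ∈ Finset.range (n+1),
      ((if h : l < k then p ⟨l, h⟩ else 1) -
        (if l = 0 then 0 else if h : l - 1 < k then p ⟨l-1, h⟩ else 1)) =
      (if h : n < k then p ⟨n, h⟩ else 1) := by
  induction n with
  | zero => simp
  | succ n ih =>
    rw [Finset.sum_range_succ, ih]
    have h1 : (n+1) - 1 = n := rfl
    simp only [h1, Nat.succ_ne_zero, if_false]
    ring

lemma mm_false_iff {k : ℕ} (f : Fin k → Bool)
    (hmon : ∀ a b : Fin k, a ≤ b → f a = true → f b = true) (m : Fin k) :
    f m = false ↔ m.val < (Finset.univ.filter fun x => f x = false).card := by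
  constructor
  · intro hm
    have hsub : Finset.Iic m ⊆ Finset.univ.filter fun x => f x = false := by
      intro x hx
      simp only [Finset.mem_Iic] at hx
      simp only [Finset.mem_filter, Finset.mem_univ, true_and]
      cases hfx : f x with
      | false => rfl
      | true => exact absurd (hmon x m hx hfx) (by simp [hm])
    have hle := Finset.card_le_card hsub
    rw [Fin.card_Iic] at hle
    omega
  · intro hm
    by_contra h
    have hft : f m = true := by
      cases hfm : f m with
      | false => exact absurd hfm h
      | true => rfl
    have hsub : (Finset.univ.filter fun x => f x = false) ⊆ Finset.Iio m := by
      intro x hx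
      simp only [Finset.mem_filter, Finset.mem_univ, true_and] at hx
      simp only [Finset.mem_Iio]
      by_contra hxm
      push_neg at hxm
      have := hmon m x hxm hft
      simp [hx] at this
    have hle := Finset.card_le_card hsub
    rw [Fin.card_Iio] at hle
    omega

lemma mm_count_g {k : ℕ} (l : ℕ) (hl : l < k) :
    (Finset.univ.filter fun m : Fin k => (decide (l ≤ m.val)) = false).card = l := by
  have : (Finset.univ.filter fun m : Fin k => (decide (l ≤ m.val)) = false)
      = Finset.Iio (⟨l, hl⟩ : Fin k) := by
    ext m
    simp only [Finset.mem_filter, Finset.mem_univ, true_and, Finset.mem_Iio,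
      Fin.lt_def, decide_eq_false_iff_not]
    omega
  rw [this, Fin.card_Iio]

/-- under the multimaximal coupling distribution, for any i < j,
Pr[Tⁱ = Tʲ = 1] = p i = min{p i, p j}: every pair is a maximal coupling. -/
theorem mmDist_pairwise_maximal {k : ℕ} (p : Fin k → ℝ) (hmono : Monotone p)
    (h0 : ∀ i, 0 ≤ p i) (h1 : ∀ i, p i ≤ 1) :
    ∀ i j : Fin k, i < j →
      (∑ f ∈ Finset.univ.filter
          (fun f : Fin k → Bool => f i = true ∧ f j = true), mmDist p f) = p i
      ∧ p i = min (p i) (p j) := by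
  intro i j hij
  refine ⟨?_, (min_eq_left (hmono hij.le)).symm⟩
  set g : ℕ → (Fin k → Bool) := fun l m => decide (l ≤ m.val) with hg
  have hkey : (Finset.univ.filter
      (fun f : Fin k → Bool => f i = true ∧ f j = true)).filter
      (fun f => ∀ a b : Fin k, a ≤ b → f a = true → f b = true)
      = (Finset.range (i.val+1)).image g := by
    ext f
    simp only [Finset.mem_filter, Finset.mem_image, Finset.mem_range, Finset.mem_univ, true_and]
    constructor
    · rintro ⟨⟨hfi, hfj⟩, hmon⟩
      set c := (Finset.univ.filter fun x => f x = false).card with hc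
      have hci : c ≤ i.val := by
        by_contra hcon
        push_neg at hcon
        have := (mm_false_iff f hmon i).mpr hcon
        simp [hfi] at this
      refine ⟨c, by omega, ?_⟩
      funext m
      by_cases hcm : c ≤ m.val
      · have : ¬ (m.val < c) := by omega
        have hfm : f m = true := by
          cases hfm : f m with
          | false => exact absurd ((mm_false_iff f hmon m).mp hfm) this
          | true => rfl
        simp [hg, hfm, hcm]
      · push_neg at hcm
        have hfm : f m = false := (mm_false_iff f hmon m).mpr hcm
        have hnc : ¬ (c ≤ m.val) := by omega
        simp [hg, hfm, hnc]
    · rintro ⟨l, hl, rfl⟩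
      have hli : l ≤ i.val := by omega
      refine ⟨⟨?_, ?_⟩, ?_⟩
      · simp [hg, hli]
      · have : l ≤ j.val := by
          have := hij
          rw [Fin.lt_def] at this
          omega
        simp [hg, this]
      · intro a b hab ha
        simp [hg] at ha ⊢
        rw [Fin.le_def] at hab
        omega
  have hzero : ∀ f ∈ (Finset.univ.filter
      (fun f : Fin k → Bool => f i = true ∧ f j = true)) \
      ((Finset.univ.filter
      (fun f : Fin k → Bool => f i = true ∧ f j = true)).filter
      (fun f => ∀ a b : Fin k, a ≤ b → f a = true → f b = true)),
      mmDist p f = 0 := by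
    intro f hf
    simp only [Finset.mem_sdiff, Finset.mem_filter] at hf
    have : ¬ ∀ a b : Fin k, a ≤ b → f a = true → f b = true := by
      tauto
    unfold mmDist
    rw [if_neg this]
  rw [← Finset.sum_subset (Finset.filter_subset _ _)
      (fun f hf hf2 => hzero f (Finset.mem_sdiff.mpr ⟨hf, hf2⟩)), hkey]
  have hinj : Set.InjOn g (Finset.range (i.val+1)) := by
    intro a ha b hb hab
    simp only [Finset.coe_range, Set.mem_Iio] at ha hb
    have ha' : a < k := by have := i.isLt; omega
    have hb' : b < k := by have := i.isLt; omega
    rw [hg] at hab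
    have e1 := congrFun hab ⟨a, ha'⟩
    have e2 := congrFun hab ⟨b, hb'⟩
    simp at e1 e2
    omega
  rw [Finset.sum_image hinj]
  have hterm : ∀ l ∈ Finset.range (i.val+1), mmDist p (g l) =
      ((if h : l < k then p ⟨l, h⟩ else 1) -
        (if l = 0 then 0 else if h : l - 1 < k then p ⟨l-1, h⟩ else 1)) := by
    intro l hl
    simp only [Finset.mem_range] at hl
    have hlk : l < k := by have := i.isLt; omega
    have hmon : ∀ a b : Fin k, a ≤ b → g l a = true → g l b = true := by
      intro a b hab ha
      simp [hg] at ha ⊢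
      rw [Fin.le_def] at hab
      omega
    unfold mmDist
    rw [if_pos hmon]
    simp only [hg]
    exact congrArg (fun c : ℕ =>
      (if h : c < k then p ⟨c, h⟩ else 1) -
        (if c = 0 then 0 else if h : c - 1 < k then p ⟨c-1, h⟩ else 1))
      (mm_count_g l hlk)
  rw [Finset.sum_congr rfl hterm, mm_tele]
  simp [i.isLt]
end

section
/- Let p_1 ≤ ... ≤ p_k be in [0,1] and (T^1,...,T^k) follow the multimaximal coupling distribution. Then for any subset of indices i_1 < ... < i_m, Pr[T^{i_1} = T^{i_2} = ... = T^{i_m}] = 1 - (p_{i_m} - p_{i_1}), which is the maximal possible value of Pr[all equal] among all couplings of binary variables with success probabilities p_{i_1},...,p_{i_m}. -/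
namespace MMAux

variable {k : ℕ}

/-- `Q p l = p l` for `l < k`, and `1` otherwise. -/
def Q (p : Fin k → ℝ) (l : ℕ) : ℝ := if h : l < k then p ⟨l, h⟩ else 1

/-- increment -/
def P (p : Fin k → ℝ) (l : ℕ) : ℝ := Q p l - (if l = 0 then 0 else Q p (l - 1))

/-- the step function with cut at `l` -/
def eF (k l : ℕ) (i : Fin k) : Bool := decide (l ≤ i.val)

lemma card_lt (n : ℕ) (hn : n ≤ k) :
    (Finset.univ.filter (fun i : Fin k => i.val < n)).card = n := by
  have : (Finset.univ.filter (fun i : Fin k => i.val < n)) =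
      (Finset.range n).attachFin (fun m hm => lt_of_lt_of_le (Finset.mem_range.mp hm) hn) := by
    ext i
    simp [Finset.mem_attachFin]
  rw [this, Finset.card_attachFin, Finset.card_range]

lemma card_false_eF (l : ℕ) (hl : l ≤ k) :
    (Finset.univ.filter (fun i : Fin k => eF k l i = false)).card = l := by
  have : (Finset.univ.filter (fun i : Fin k => eF k l i = false)) =
      (Finset.univ.filter (fun i : Fin k => i.val < l)) := by
    ext i; simp [eF]
  rw [this, card_lt l hl]

lemma mono_eF (l : ℕ) : ∀ i j : Fin k, i ≤ j → eF k l i = true → eF k l j = true := by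
  intro i j hij h
  simp only [eF, decide_eq_true_iff] at *
  exact le_trans h hij

lemma mono_eq_eF (f : Fin k → Bool)
    (hf : ∀ i j : Fin k, i ≤ j → f i = true → f j = true) :
    f = eF k ((Finset.univ.filter (fun i => f i = false)).card) := by
  set S := Finset.univ.filter (fun i => f i = false) with hS
  set c := S.card with hc
  have hmemS : ∀ i : Fin k, i ∈ S ↔ f i = false := by
    intro i; simp [hS]
  have hdown : ∀ i j : Fin k, i ≤ j → j ∈ S → i ∈ S := by
    intro i j hij hj
    rw [hmemS] at *
    by_contra h
    have : f i = true := by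
      cases hfi : f i
      · exact absurd hfi h
      · rfl
    have := hf i j hij this
    rw [hj] at this; exact Bool.false_ne_true this
  have key : ∀ i : Fin k, i ∈ S ↔ i.val < c := by
    intro i
    constructor
    · intro hi
      by_contra h
      push_neg at h
      -- c ≤ i.val, then {j : j.val ≤ i.val} ⊆ S, card i.val+1 ≤ c
      have hsub : (Finset.univ.filter (fun j : Fin k => j.val < i.val + 1)) ⊆ S := by
        intro j hj
        simp only [Finset.mem_filter, Finset.mem_univ, true_and] at hj
        exact hdown j i (by omega) hi
      have := Finset.card_le_card hsub
      rw [card_lt (i.val + 1) (by omega)] at this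
      omega
    · intro hi
      by_contra h
      have hsub : S ⊆ (Finset.univ.filter (fun j : Fin k => j.val < i.val)) := by
        intro j hj
        simp only [Finset.mem_filter, Finset.mem_univ, true_and]
        by_contra hji
        push_neg at hji
        exact h (hdown i j (by
          have : i.val ≤ j.val := hji
          exact this) hj)
      have := Finset.card_le_card hsub
      rw [card_lt i.val (by omega)] at this
      omega
  funext i
  have hkey : f i = false ↔ i.val < c := by rw [← hmemS]; exact key i
  simp only [eF]
  by_cases hic : c ≤ i.val
  · have : f i = true := by
      cases h : f i
      · exact absurd (hkey.mp h) (by omega)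
      · rfl
    rw [this]; simp [hic]
  · have : f i = false := hkey.mpr (by omega)
    rw [this]; simp; omega

lemma eF_inj {l l' : ℕ} (hl : l ≤ k) (hl' : l' ≤ k) (h : eF k l = eF k l') : l = l' := by
  have := card_false_eF (k := k) l hl
  have := card_false_eF (k := k) l' hl'
  rw [h] at *
  omega

lemma mmDist_eF (p : Fin k → ℝ) (l : ℕ) (hl : l ≤ k) :
    mmDist p (eF k l) = P p l := by
  unfold mmDist P Q
  rw [if_pos (mono_eF l), card_false_eF l hl]

lemma mmDist_nonmono (p : Fin k → ℝ) (f : Fin k → Bool)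
    (hf : ¬ ∀ i j : Fin k, i ≤ j → f i = true → f j = true) :
    mmDist p f = 0 := by
  unfold mmDist; rw [if_neg hf]

end MMAux

/-- under the multimaximal coupling distribution, for any nonempty
subset s of indices, Pr[all Tⁱ, i ∈ s, are equal] = 1 - (p (max s) - p (min s)),
which is the maximal possible value of Pr[all equal] among all couplings of
binary variables with success probabilities (p i), i ∈ s. -/
theorem mmDist_subset_all_equal {k : ℕ} (p : Fin k → ℝ) (hmono : Monotone p)
    (h0 : ∀ i, 0 ≤ p i) (h1 : ∀ i, p i ≤ 1) (s : Finset (Fin k))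
    (hs : s.Nonempty) :
    (∑ f ∈ Finset.univ.filter
        (fun f : Fin k → Bool => ∀ i ∈ s, ∀ j ∈ s, f i = f j), mmDist p f)
      = 1 - (p (s.max' hs) - p (s.min' hs)) ∧
    ∀ ν : ({x : Fin k // x ∈ s} → Bool) → ℝ,
      (∀ g, 0 ≤ ν g) → (∑ g, ν g) = 1 →
      (∀ a : {x : Fin k // x ∈ s},
        ∑ g ∈ Finset.univ.filter
          (fun g : {x : Fin k // x ∈ s} → Bool => g a = true), ν g = p a.1) →
      (∑ g ∈ Finset.univ.filter
          (fun g : {x : Fin k // x ∈ s} → Bool => ∀ a b, g a = g b), ν g)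
        ≤ 1 - (p (s.max' hs) - p (s.min' hs)) := by
  open MMAux in
  set m := (s.min' hs).val with hm
  set M := (s.max' hs).val with hM
  have hMk : M < k := (s.max' hs).isLt
  have hmM : m ≤ M := s.min'_le _ (s.max'_mem hs)
  constructor
  · -- Part 1
    have step1 : (∑ f ∈ Finset.univ.filter
        (fun f : Fin k → Bool => ∀ i ∈ s, ∀ j ∈ s, f i = f j), mmDist p f)
        = ∑ f ∈ Finset.univ.filter
          (fun f : Fin k → Bool => (∀ i j : Fin k, i ≤ j → f i = true → f j = true)
            ∧ ∀ i ∈ s, ∀ j ∈ s, f i = f j), mmDist p f := by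
      symm
      apply Finset.sum_subset
      · intro f hf
        simp only [Finset.mem_filter, Finset.mem_univ, true_and] at *
        exact hf.2
      · intro f hf hf'
        simp only [Finset.mem_filter, Finset.mem_univ, true_and] at hf hf'
        apply MMAux.mmDist_nonmono
        intro hmono'
        exact hf' ⟨hmono', hf⟩
    rw [step1]
    have hPhi_eF : ∀ l : ℕ,
        ((∀ i ∈ s, ∀ j ∈ s, MMAux.eF k l i = MMAux.eF k l j) ↔ (l ≤ m ∨ M < l)) := by
      intro l
      constructor
      · intro h
        by_contra hc
        push_neg at hc
        have h1' := h (s.min' hs) (s.min'_mem hs) (s.max' hs) (s.max'_mem hs)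
        simp only [MMAux.eF, decide_eq_decide] at h1'
        omega
      · intro h i hi j hj
        have hmi : m ≤ i.val := s.min'_le i hi
        have hMi : i.val ≤ M := s.le_max' i hi
        have hmj : m ≤ j.val := s.min'_le j hj
        have hMj : j.val ≤ M := s.le_max' j hj
        simp only [MMAux.eF, decide_eq_decide]
        omega
    have step2 : (∑ f ∈ Finset.univ.filter
          (fun f : Fin k → Bool => (∀ i j : Fin k, i ≤ j → f i = true → f j = true)
            ∧ ∀ i ∈ s, ∀ j ∈ s, f i = f j), mmDist p f)
        = ∑ l ∈ (Finset.range (k+1)).filter (fun l => l ≤ m ∨ M < l), MMAux.P p l := by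
      apply Finset.sum_nbij'
        (i := fun f => (Finset.univ.filter (fun i => f i = false)).card)
        (j := fun l => MMAux.eF k l)
      · intro f hf
        simp only [Finset.mem_filter, Finset.mem_univ, true_and] at hf ⊢
        have hcard : (Finset.univ.filter (fun i => f i = false)).card ≤ k := by
          calc (Finset.univ.filter (fun i => f i = false)).card
              ≤ Finset.univ.card := Finset.card_le_card (Finset.filter_subset _ _)
            _ = k := by simp
        refine ⟨Finset.mem_range.mpr (by omega), ?_⟩
        rw [← hPhi_eF]
        rw [← MMAux.mono_eq_eF f hf.1]
        exact hf.2
      · intro l hl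
        simp only [Finset.mem_filter, Finset.mem_range] at hl
        simp only [Finset.mem_filter, Finset.mem_univ, true_and]
        exact ⟨MMAux.mono_eF l, (hPhi_eF l).mpr hl.2⟩
      · intro f hf
        simp only [Finset.mem_filter, Finset.mem_univ, true_and] at hf
        exact (MMAux.mono_eq_eF f hf.1).symm
      · intro l hl
        simp only [Finset.mem_filter, Finset.mem_range] at hl
        exact MMAux.card_false_eF l (by omega)
      · intro f hf
        simp only [Finset.mem_filter, Finset.mem_univ, true_and] at hf
        unfold mmDist MMAux.P MMAux.Q
        rw [if_pos hf.1]
    rw [step2]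
    have hsplit : (Finset.range (k+1)).filter (fun l => l ≤ m ∨ M < l)
        = Finset.range (m+1) ∪ Finset.Ico (M+1) (k+1) := by
      ext l
      simp only [Finset.mem_filter, Finset.mem_range, Finset.mem_union, Finset.mem_Ico]
      omega
    rw [hsplit, Finset.sum_union (by
      rw [Finset.disjoint_left]
      intro l hl hl'
      simp only [Finset.mem_range, Finset.mem_Ico] at hl hl'
      omega)]
    have tele : ∀ n : ℕ, ∑ l ∈ Finset.range (n+1), MMAux.P p l = MMAux.Q p n := by
      intro n
      induction n with
      | zero => simp [MMAux.P]
      | succ n ih =>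
        rw [Finset.sum_range_succ, ih]
        unfold MMAux.P
        rw [if_neg (Nat.succ_ne_zero n)]
        simp
    have tele2 : ∑ l ∈ Finset.Ico (M+1) (k+1), MMAux.P p l
        = MMAux.Q p k - MMAux.Q p M := by
      rw [Finset.sum_Ico_eq_sub _ (by omega), tele, tele]
    rw [tele, tele2]
    have hQk : MMAux.Q p k = 1 := by unfold MMAux.Q; rw [dif_neg (lt_irrefl k)]
    have hQm : MMAux.Q p m = p (s.min' hs) := by
      unfold MMAux.Q
      rw [dif_pos (by omega : m < k)]
    have hQM : MMAux.Q p M = p (s.max' hs) := by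
      unfold MMAux.Q
      rw [dif_pos hMk]
    rw [hQk, hQm, hQM]
    ring
  · -- Part 2
    intro ν hν hsum hmarg
    set a : {x : Fin k // x ∈ s} := ⟨s.max' hs, s.max'_mem hs⟩ with ha
    set b : {x : Fin k // x ∈ s} := ⟨s.min' hs, s.min'_mem hs⟩ with hb
    set A := Finset.univ.filter (fun g : {x : Fin k // x ∈ s} → Bool => g a = true) with hA
    set B := Finset.univ.filter (fun g : {x : Fin k // x ∈ s} → Bool => g b = true) with hB
    have hsumA : ∑ g ∈ A, ν g = p (s.max' hs) := hmarg a
    have hsumB : ∑ g ∈ B, ν g = p (s.min' hs) := hmarg b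
    have hD : p (s.max' hs) - p (s.min' hs) ≤ ∑ g ∈ A \ B, ν g := by
      have hsplitA : ∑ g ∈ A ∩ B, ν g + ∑ g ∈ A \ B, ν g = ∑ g ∈ A, ν g :=
        Finset.sum_inter_add_sum_sdiff A B ν
      have hIB : ∑ g ∈ A ∩ B, ν g ≤ ∑ g ∈ B, ν g :=
        Finset.sum_le_sum_of_subset_of_nonneg (Finset.inter_subset_right)
          (fun g _ _ => hν g)
      rw [hsumA, hsumB] at *
      linarith
    have hsub : (Finset.univ.filter
        (fun g : {x : Fin k // x ∈ s} → Bool => ∀ a b, g a = g b))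
        ⊆ Finset.univ \ (A \ B) := by
      intro g hg
      simp only [Finset.mem_filter, Finset.mem_univ, true_and] at hg
      rw [Finset.mem_sdiff]
      refine ⟨Finset.mem_univ g, fun hmem => ?_⟩
      rw [Finset.mem_sdiff, hA, hB] at hmem
      simp only [Finset.mem_filter, Finset.mem_univ, true_and] at hmem
      exact hmem.2 ((hg b a).trans hmem.1)
    calc (∑ g ∈ Finset.univ.filter
          (fun g : {x : Fin k // x ∈ s} → Bool => ∀ a b, g a = g b), ν g)
        ≤ ∑ g ∈ Finset.univ \ (A \ B), ν g :=
          Finset.sum_le_sum_of_subset_of_nonneg hsub (fun g _ _ => hν g)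
      _ = (∑ g, ν g) - ∑ g ∈ A \ B, ν g :=
          Finset.sum_sdiff_eq_sub (Finset.subset_univ _)
      _ ≤ 1 - (p (s.max' hs) - p (s.min' hs)) := by rw [hsum]; linarith
end

section
/- Uniqueness of the multimaximal coupling: if (T^1,...,T^k) is a jointly distributed tuple of binary (±1) random variables with Pr[T^i=1]=p_i where p_1 ≤ ... ≤ p_k, and if Pr[T^i = T^{i+1} = 1] = p_i for every i = 1,...,k-1, then the distribution of (T^1,...,T^k) is exactly the multimaximal coupling distribution: (1,...,1) has probability p_1, the vector with -1 in the first l coordinates and 1 in the rest has probability p_{l+1}-p_l, (-1,...,-1) has probability 1-p_k, and all other vectors have probability 0. -/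
/-- uniqueness of the multimaximal coupling. If a joint
distribution μ of k binary variables has marginals Pr[Tⁱ=1] = p i with
p 0 ≤ … ≤ p (k-1), and Pr[Tⁱ = Tⁱ⁺¹ = 1] = p i for every i = 0,…,k-2, then μ is
exactly the multimaximal coupling distribution. -/
theorem mmDist_unique {k : ℕ} (p : Fin k → ℝ) (hmono : Monotone p)
    (h0 : ∀ i, 0 ≤ p i) (h1 : ∀ i, p i ≤ 1)
    (μ : (Fin k → Bool) → ℝ) (hpos : ∀ f, 0 ≤ μ f) (hsum : (∑ f, μ f) = 1)
    (hmarg : ∀ i : Fin k,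
      ∑ f ∈ Finset.univ.filter (fun f : Fin k → Bool => f i = true), μ f = p i)
    (hpair : ∀ (i : ℕ) (h : i + 1 < k),
      ∑ f ∈ Finset.univ.filter
        (fun f : Fin k → Bool =>
          f ⟨i, Nat.lt_of_succ_lt h⟩ = true ∧ f ⟨i + 1, h⟩ = true), μ f
        = p ⟨i, Nat.lt_of_succ_lt h⟩) :
    μ = mmDist p := by
  -- Step 1: adjacent null lemma
  have Nadj : ∀ (i : ℕ) (h : i + 1 < k) (f : Fin k → Bool),
      f ⟨i, Nat.lt_of_succ_lt h⟩ = true → f ⟨i+1, h⟩ = false → μ f = 0 := by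
    intro i h f hfi hfi1
    set s := Finset.univ.filter (fun g : Fin k → Bool => g ⟨i, Nat.lt_of_succ_lt h⟩ = true)
      with hs
    set t := Finset.univ.filter (fun g : Fin k → Bool =>
      g ⟨i, Nat.lt_of_succ_lt h⟩ = true ∧ g ⟨i+1, h⟩ = true) with ht
    have hts : t ⊆ s := by
      intro g hg
      simp only [hs, ht, Finset.mem_filter, Finset.mem_univ, true_and] at *
      exact hg.1
    have hdiff : ∑ g ∈ s \ t, μ g = 0 := by
      rw [Finset.sum_sdiff_eq_sub hts, hs, ht, hmarg, hpair i h, sub_self]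
    have hmem : f ∈ s \ t := by
      simp only [hs, ht, Finset.mem_sdiff, Finset.mem_filter, Finset.mem_univ, true_and]
      exact ⟨hfi, fun hc => by simp [hfi1] at hc⟩
    exact (Finset.sum_eq_zero_iff_of_nonneg (fun g _ => hpos g)).mp hdiff f hmem
  -- Step 2: general null lemma
  have N : ∀ (f : Fin k → Bool) (i j : Fin k), i ≤ j → f i = true → f j = false → μ f = 0 := by
    have key : ∀ (d : ℕ) (f : Fin k → Bool) (i j : Fin k), (j : ℕ) = (i : ℕ) + d →
        f i = true → f j = false → μ f = 0 := by
      intro d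
      induction d with
      | zero =>
        intro f i j hij h1 h2
        have : i = j := Fin.ext (by omega)
        rw [this, h2] at h1; exact absurd h1 (by simp)
      | succ d ih =>
        intro f i j hij h1 h2
        have hmk : (i : ℕ) + d < k := by omega
        by_cases hm : f ⟨(i : ℕ) + d, hmk⟩ = true
        · have hlt : (i : ℕ) + d + 1 < k := by omega
          have e : (⟨(i : ℕ) + d + 1, hlt⟩ : Fin k) = j := Fin.ext (by first | omega | (simp only [Fin.val_mk]; omega))
          exact Nadj ((i : ℕ) + d) hlt f hm (by rw [e]; exact h2)
        · exact ih f i ⟨(i : ℕ) + d, hmk⟩ rfl h1 (by simpa using hm)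
    intro f i j hij h1 h2
    exact key ((j : ℕ) - (i : ℕ)) f i j (by omega) h1 h2
  funext f
  by_cases hmf : ∀ i j : Fin k, i ≤ j → f i = true → f j = true
  · -- monotone case
    set l := (Finset.univ.filter (fun i : Fin k => f i = false)).card with hldef
    have hlk : l ≤ k := by
      calc l ≤ Finset.univ.card := Finset.card_filter_le _ _
        _ = k := by simp
    have hub : ∀ j : Fin k, f j = true → l ≤ (j : ℕ) := by
      intro j hj
      have hsub : (Finset.univ.filter (fun i : Fin k => f i = false)) ⊆ Finset.Iio j := by
        intro i hi
        simp only [Finset.mem_filter, Finset.mem_univ, true_and] at hi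
        simp only [Finset.mem_Iio]
        by_contra hc
        have : j ≤ i := le_of_not_gt hc
        rw [hmf j i this hj] at hi; exact absurd hi (by simp)
      have := Finset.card_le_card hsub
      rwa [Fin.card_Iio] at this
    have hlb : ∀ j : Fin k, f j = false → (j : ℕ) < l := by
      intro j hj
      have hsub : Finset.Iic j ⊆ (Finset.univ.filter (fun i : Fin k => f i = false)) := by
        intro i hi
        simp only [Finset.mem_Iic] at hi
        simp only [Finset.mem_filter, Finset.mem_univ, true_and]
        cases hfi : f i with
        | false => rfl
        | true => rw [hmf i j hi hfi] at hj; exact absurd hj (by simp)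
      have := Finset.card_le_card hsub
      rw [Fin.card_Iic] at this; omega
    have hchar : ∀ j : Fin k, f j = false ↔ (j : ℕ) < l := by
      intro j
      constructor
      · exact hlb j
      · intro hjl
        cases hfj : f j with
        | false => rfl
        | true => exact absurd hjl (by have := hub j hfj; omega)
    have hchart : ∀ j : Fin k, f j = true ↔ l ≤ (j : ℕ) := by
      intro j
      cases hfj : f j with
      | false => simp only [Bool.false_eq_true, false_iff]; have := hlb j hfj; omega
      | true => simp only [true_iff]; exact hub j hfj
    -- compute mmDist
    rw [mmDist, if_pos hmf]
    simp only [← hldef]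
    rcases Nat.eq_zero_or_pos k with hk0 | hk
    · subst hk0
      have hl0 : l = 0 := by omega
      have huniv : (Finset.univ : Finset (Fin 0 → Bool)) = {f} := by
        apply Finset.eq_singleton_iff_unique_mem.mpr
        exact ⟨Finset.mem_univ f, fun g _ => funext fun i => absurd i.isLt (by omega)⟩
      rw [huniv, Finset.sum_singleton] at hsum
      simp [hl0, hsum]
    by_cases hl0 : l = 0
    · -- all-true vector : μ f = p 0
      simp only [hl0]
      rw [dif_pos hk]
      norm_num
      rw [← hmarg ⟨0, hk⟩]
      refine (Finset.sum_eq_single_of_mem f ?_ ?_).symm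
      · simp only [Finset.mem_filter, Finset.mem_univ, true_and]
        exact (hchart ⟨0, hk⟩).mpr (by omega)
      · intro g hg hgf
        obtain ⟨j, hj⟩ := Function.ne_iff.mp hgf
        have hfj : f j = true := (hchart j).mpr (by omega)
        have hgj : g j = false := by
          cases hgjc : g j with
          | false => rfl
          | true => rw [hgjc, hfj] at hj; exact absurd rfl hj
        simp only [Finset.mem_filter, Finset.mem_univ, true_and] at hg
        exact N g ⟨0, hk⟩ j (by simp [Fin.le_def]) hg hgj
    · by_cases hlltk : l < k
      · -- middle vector : μ f = p l - p (l-1)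
        have hl1k : l - 1 < k := by omega
        rw [dif_pos hlltk, if_neg hl0, dif_pos hl1k]
        have hsucc : l - 1 + 1 < k := by omega
        have hp := hpair (l - 1) hsucc
        have e : (⟨l - 1 + 1, hsucc⟩ : Fin k) = ⟨l, hlltk⟩ := Fin.ext (by first | omega | (simp only [Fin.val_mk]; omega))
        have e2 : (⟨l - 1, Nat.lt_of_succ_lt hsucc⟩ : Fin k) = ⟨l - 1, hl1k⟩ := rfl
        rw [e, e2] at hp
        set s := Finset.univ.filter (fun g : Fin k → Bool => g ⟨l, hlltk⟩ = true) with hsdef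
        set t := Finset.univ.filter (fun g : Fin k → Bool =>
          g ⟨l - 1, hl1k⟩ = true ∧ g ⟨l, hlltk⟩ = true) with htdef
        have hts : t ⊆ s := by
          intro g hg
          simp only [hsdef, htdef, Finset.mem_filter, Finset.mem_univ, true_and] at *
          exact hg.2
        have hsub : ∑ g ∈ s \ t, μ g = p ⟨l, hlltk⟩ - p ⟨l - 1, hl1k⟩ := by
          rw [Finset.sum_sdiff_eq_sub hts, hsdef, htdef, hmarg, hp]
        rw [← hsub]
        refine (Finset.sum_eq_single_of_mem f ?_ ?_).symm
        · have hfl : f ⟨l, hlltk⟩ = true := (hchart _).mpr (by simp)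
          have hfl1 : f ⟨l - 1, hl1k⟩ = false := (hchar _).mpr (by simp; omega)
          simp only [hsdef, htdef, Finset.mem_sdiff, Finset.mem_filter, Finset.mem_univ,
            true_and]
          exact ⟨hfl, fun hc => by rw [hfl1] at hc; simp at hc⟩
        · intro g hg hgf
          simp only [hsdef, htdef, Finset.mem_sdiff, Finset.mem_filter, Finset.mem_univ,
            true_and, not_and] at hg
          obtain ⟨hgl, hgl1⟩ := hg
          have hgl1' : g ⟨l - 1, hl1k⟩ = false := by
            cases hc : g ⟨l - 1, hl1k⟩ with
            | false => rfl
            | true => exact absurd hgl (by simp [hgl1 hc])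
          obtain ⟨j, hj⟩ := Function.ne_iff.mp hgf
          cases hfj : f j with
          | false =>
            have hjl : (j : ℕ) < l := (hchar j).mp hfj
            have hgj : g j = true := by
              cases hc : g j with
              | false => rw [hc, hfj] at hj; exact absurd rfl hj
              | true => rfl
            exact N g j ⟨l - 1, hl1k⟩ (by simp [Fin.le_def]; omega) hgj hgl1'
          | true =>
            have hjl : l ≤ (j : ℕ) := (hchart j).mp hfj
            have hgj : g j = false := by
              cases hc : g j with
              | false => rfl
              | true => rw [hc, hfj] at hj; exact absurd rfl hj
            exact N g ⟨l, hlltk⟩ j (by simp [Fin.le_def]; omega) hgl hgj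
      · -- all-false vector : μ f = 1 - p (k-1)
        have hlk' : l = k := by omega
        have hk : 0 < k := by omega
        have hk1 : k - 1 < k := by omega
        have hl1k : l - 1 < k := by omega
        rw [dif_neg hlltk, if_neg hl0, dif_pos hl1k]
        set s := Finset.univ.filter (fun g : Fin k → Bool => g ⟨k - 1, hk1⟩ = true) with hsdef
        have hsub : ∑ g ∈ Finset.univ \ s, μ g = 1 - p ⟨k - 1, hk1⟩ := by
          rw [Finset.sum_sdiff_eq_sub (Finset.subset_univ s), hsum, hsdef, hmarg]
        have e : (⟨l - 1, hl1k⟩ : Fin k) = ⟨k - 1, hk1⟩ := Fin.ext (by first | omega | (simp only [Fin.val_mk]; omega))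
        rw [e, ← hsub]
        refine (Finset.sum_eq_single_of_mem f ?_ ?_).symm
        · simp only [hsdef, Finset.mem_sdiff, Finset.mem_univ, Finset.mem_filter, true_and]
          have : f ⟨k - 1, hk1⟩ = false := (hchar _).mpr (by simp; omega)
          simp [this]
        · intro g hg hgf
          simp only [hsdef, Finset.mem_sdiff, Finset.mem_univ, Finset.mem_filter,
            true_and] at hg
          have hgk : g ⟨k - 1, hk1⟩ = false := by
            cases hc : g ⟨k - 1, hk1⟩ with
            | false => rfl
            | true => exact absurd hc hg
          obtain ⟨j, hj⟩ := Function.ne_iff.mp hgf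
          have hfj : f j = false := (hchar j).mpr (by omega)
          have hgj : g j = true := by
            cases hc : g j with
            | false => rw [hc, hfj] at hj; exact absurd rfl hj
            | true => rfl
          exact N g j ⟨k - 1, hk1⟩ (by simp [Fin.le_def]; omega) hgj hgk
  · -- non-monotone case : both sides 0
    rw [mmDist, if_neg hmf]
    push_neg at hmf
    obtain ⟨i, j, hij, hfi, hfj⟩ := hmf
    exact N f i j hij hfi (by simpa using hfj)
end

section
/- Deleting a random variable preserves noncontextuality: let a system of binary random variables be given by a finite set of contexts, each context being a finite set of content-indexed binary variables with a known joint distribution. If the whole system admits a joint distribution S over all (context, content) pairs such that (i) for each context the marginal of S agrees with the given joint distribution, and (ii) for each content q and each pair of contexts c, c' containing q, Pr[S_q^c = S_q^{c'} = 1] = min{Pr[S_q^c=1], Pr[S_q^{c'}=1]}, then any subsystem obtained by removing one (context, content) pair also admits such a joint distribution (obtained by marginalization). -/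
/-- deleting a random variable preserves noncontextuality.
Variables are indexed by a finite type ι of (context, content) pairs, via maps
`ctx` and `cnt`. If S is a joint distribution of all the variables whose
content-sharing pairs are all coupled maximally
(Pr[both = 1] = min of the marginals), then after removing one variable a₀ the
marginalized distribution S' is again such a joint distribution for the
subsystem (its context-marginals are the marginals of S, hence match the
subsystem's empirical distributions, and all its content-sharing pairs are
coupled maximally). -/
theorem delete_preserves_noncontextual {ι C Q : Type} [Fintype ι]
    [DecidableEq ι] (ctx : ι → C) (cnt : ι → Q)
    (S : (ι → Bool) → ℝ) (hpos : ∀ f, 0 ≤ S f) (hsum : (∑ f, S f) = 1)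
    (hmm : ∀ a b : ι, a ≠ b → cnt a = cnt b →
      ∑ f ∈ Finset.univ.filter (fun f : ι → Bool => f a = true ∧ f b = true), S f
        = min (∑ f ∈ Finset.univ.filter (fun f : ι → Bool => f a = true), S f)
              (∑ f ∈ Finset.univ.filter (fun f : ι → Bool => f b = true), S f))
    (a₀ : ι) :
    ∃ S' : ({x : ι // x ≠ a₀} → Bool) → ℝ,
      (∀ g, S' g = ∑ f ∈ Finset.univ.filter
          (fun f : ι → Bool => ∀ x : {x : ι // x ≠ a₀}, f x.1 = g x), S f) ∧
      (∀ g, 0 ≤ S' g) ∧ (∑ g, S' g) = 1 ∧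
      (∀ a b : {x : ι // x ≠ a₀}, a ≠ b → cnt a.1 = cnt b.1 →
        ∑ g ∈ Finset.univ.filter
            (fun g : {x : ι // x ≠ a₀} → Bool => g a = true ∧ g b = true), S' g
          = min (∑ g ∈ Finset.univ.filter
                  (fun g : {x : ι // x ≠ a₀} → Bool => g a = true), S' g)
                (∑ g ∈ Finset.univ.filter
                  (fun g : {x : ι // x ≠ a₀} → Bool => g b = true), S' g)) := by
  classical
  set r : (ι → Bool) → ({x : ι // x ≠ a₀} → Bool) := fun f x => f x.1 with hr
  have key : ∀ (p : ({x : ι // x ≠ a₀} → Bool) → Prop) [DecidablePred p],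
      (∑ g ∈ Finset.univ.filter p,
        ∑ f ∈ Finset.univ.filter
          (fun f : ι → Bool => ∀ x : {x : ι // x ≠ a₀}, f x.1 = g x), S f)
        = ∑ f ∈ Finset.univ.filter (fun f : ι → Bool => p (r f)), S f := by
    intro p _
    rw [← Finset.sum_fiberwise_of_maps_to (f := S) (g := r)
        (s := Finset.univ.filter (fun f : ι → Bool => p (r f)))
        (t := Finset.univ.filter p)
        (fun f hf => by
          simp only [Finset.mem_filter, Finset.mem_univ, true_and] at hf ⊢
          exact hf)]
    apply Finset.sum_congr rfl
    intro g hg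
    simp only [Finset.mem_filter, Finset.mem_univ, true_and] at hg
    apply Finset.sum_congr _ (fun _ _ => rfl)
    ext f
    simp only [Finset.mem_filter, Finset.mem_univ, true_and, Finset.filter_filter]
    constructor
    · intro h
      have : r f = g := funext h
      exact ⟨this ▸ hg, this⟩
    · intro ⟨_, h⟩ x
      exact congrFun h x
  refine ⟨fun g => ∑ f ∈ Finset.univ.filter
      (fun f : ι → Bool => ∀ x : {x : ι // x ≠ a₀}, f x.1 = g x), S f,
    fun g => rfl, fun g => Finset.sum_nonneg (fun f _ => hpos f), ?_, ?_⟩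
  · have := key (fun _ => True)
    simpa [Finset.filter_true_of_mem, hsum] using this
  · intro a b hab hq
    have hne : a.1 ≠ b.1 := fun h => hab (Subtype.ext h)
    have h1 := key (fun g => g a = true ∧ g b = true)
    have h2 := key (fun g => g a = true)
    have h3 := key (fun g => g b = true)
    rw [h1, h2, h3]
    exact hmm a.1 b.1 hne hq
end

section
/- A consistently connected system is noncontextual in the CbD 2.0 sense if and only if it admits a joint distribution S over all (context, content) pairs matching all context marginals and such that for each content q, all variables S_q^c with different contexts c are almost surely equal. -/
/-- Probability that both coordinates a and b equal 1 (true). -/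
def prBoth {ι : Type} [Fintype ι] [DecidableEq ι] (S : (ι → Bool) → ℝ)
    (a b : ι) : ℝ :=
  ∑ f ∈ Finset.univ.filter (fun f : ι → Bool => f a = true ∧ f b = true), S f

/-- Marginal probability that coordinate a equals 1 (true). -/
def prOne {ι : Type} [Fintype ι] [DecidableEq ι] (S : (ι → Bool) → ℝ)
    (a : ι) : ℝ :=
  ∑ f ∈ Finset.univ.filter (fun f : ι → Bool => f a = true), S f

/-- Probability that coordinates a and b are equal. -/
def prEq {ι : Type} [Fintype ι] [DecidableEq ι] (S : (ι → Bool) → ℝ)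
    (a b : ι) : ℝ :=
  ∑ f ∈ Finset.univ.filter (fun f : ι → Bool => f a = f b), S f

/-- S matches the empirical joint distribution D c of every conteXt c. -/
def Matches {ι C : Type} [Fintype ι] [DecidableEq ι] [DecidableEq C]
    (ctx : ι → C) (D : (c : C) → ({x : ι // ctx x = c} → Bool) → ℝ)
    (S : (ι → Bool) → ℝ) : Prop :=
  ∀ (c : C) (u : {x : ι // ctx x = c} → Bool),
    (∑ f ∈ Finset.univ.filter
        (fun f : ι → Bool => ∀ x : {x : ι // ctx x = c}, f x.1 = u x), S f)
      = D c u

/-- The empirical marginal probability Pr[R_a = 1], computed from the joint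
distribution of a's conteXt. -/
def margD {ι C : Type} [Fintype ι] [DecidableEq ι] [DecidableEq C]
    (ctx : ι → C) (D : (c : C) → ({x : ι // ctx x = c} → Bool) → ℝ)
    (a : ι) : ℝ :=
  ∑ u ∈ Finset.univ.filter
      (fun u : {x : ι // ctx x = ctx a} → Bool => u ⟨a, rfl⟩ = true),
    D (ctx a) u


/-- Auxiliary: probability that f a = p and f b = q. -/
def pAB {ι : Type} [Fintype ι] [DecidableEq ι] (S : (ι → Bool) → ℝ)
    (a b : ι) (p q : Bool) : ℝ :=
  ∑ f ∈ Finset.univ.filter (fun f : ι → Bool => f a = p ∧ f b = q), S f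

lemma pAB_nonneg {ι : Type} [Fintype ι] [DecidableEq ι] (S : (ι → Bool) → ℝ)
    (hpos : ∀ f, 0 ≤ S f) (a b : ι) (p q : Bool) : 0 ≤ pAB S a b p q :=
  Finset.sum_nonneg fun f _ => hpos f

lemma prOne_split {ι : Type} [Fintype ι] [DecidableEq ι] (S : (ι → Bool) → ℝ)
    (a b : ι) : prOne S a = pAB S a b true true + pAB S a b true false := by
  unfold prOne pAB
  rw [← Finset.sum_filter_add_sum_filter_not
      (Finset.univ.filter (fun f : ι → Bool => f a = true)) (fun f => f b = true) S,
      Finset.filter_filter, Finset.filter_filter]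
  congr 1
  apply Finset.sum_congr _ (fun _ _ => rfl)
  apply Finset.filter_congr
  intro f _
  simp

lemma prOne_split' {ι : Type} [Fintype ι] [DecidableEq ι] (S : (ι → Bool) → ℝ)
    (a b : ι) : prOne S b = pAB S a b true true + pAB S a b false true := by
  unfold prOne pAB
  rw [← Finset.sum_filter_add_sum_filter_not
      (Finset.univ.filter (fun f : ι → Bool => f b = true)) (fun f => f a = true) S,
      Finset.filter_filter, Finset.filter_filter]
  congr 1
  · apply Finset.sum_congr _ (fun _ _ => rfl)
    apply Finset.filter_congr; intro f _
    cases h1 : f a <;> cases h2 : f b <;> simp [h1, h2]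
  · apply Finset.sum_congr _ (fun _ _ => rfl)
    apply Finset.filter_congr; intro f _
    cases h1 : f a <;> cases h2 : f b <;> simp [h1, h2]

lemma prBoth_eq_pAB {ι : Type} [Fintype ι] [DecidableEq ι] (S : (ι → Bool) → ℝ)
    (a b : ι) : prBoth S a b = pAB S a b true true := rfl

lemma prEq_split {ι : Type} [Fintype ι] [DecidableEq ι] (S : (ι → Bool) → ℝ)
    (a b : ι) : prEq S a b = pAB S a b true true + pAB S a b false false := by
  unfold prEq pAB
  rw [← Finset.sum_filter_add_sum_filter_not
      (Finset.univ.filter (fun f : ι → Bool => f a = f b)) (fun f => f a = true) S,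
      Finset.filter_filter, Finset.filter_filter]
  congr 1
  · apply Finset.sum_congr _ (fun _ _ => rfl)
    apply Finset.filter_congr; intro f _
    cases h1 : f a <;> cases h2 : f b <;> simp [h1, h2]
  · apply Finset.sum_congr _ (fun _ _ => rfl)
    apply Finset.filter_congr; intro f _
    cases h1 : f a <;> cases h2 : f b <;> simp [h1, h2]

lemma total_split {ι : Type} [Fintype ι] [DecidableEq ι] (S : (ι → Bool) → ℝ)
    (a b : ι) :
    pAB S a b true true + pAB S a b true false + pAB S a b false true
      + pAB S a b false false = ∑ f, S f := by
  have h1 := Finset.sum_filter_add_sum_filter_not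
      (Finset.univ : Finset (ι → Bool)) (fun f => f a = true) S
  have h2 := Finset.sum_filter_add_sum_filter_not
      (Finset.univ.filter (fun f : ι → Bool => f a = true)) (fun f => f b = true) S
  have h3 := Finset.sum_filter_add_sum_filter_not
      (Finset.univ.filter (fun f : ι → Bool => ¬ f a = true)) (fun f => f b = true) S
  rw [Finset.filter_filter, Finset.filter_filter] at h2 h3
  have e1 : pAB S a b true true = ∑ f ∈ Finset.univ.filter
      (fun f : ι → Bool => f a = true ∧ f b = true), S f := rfl
  have e2 : pAB S a b true false = ∑ f ∈ Finset.univ.filter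
      (fun f : ι → Bool => f a = true ∧ ¬ f b = true), S f := by
    unfold pAB; apply Finset.sum_congr _ (fun _ _ => rfl)
    apply Finset.filter_congr; intro f _; simp
  have e3 : pAB S a b false true = ∑ f ∈ Finset.univ.filter
      (fun f : ι → Bool => ¬ f a = true ∧ f b = true), S f := by
    unfold pAB; apply Finset.sum_congr _ (fun _ _ => rfl)
    apply Finset.filter_congr; intro f _; simp
  have e4 : pAB S a b false false = ∑ f ∈ Finset.univ.filter
      (fun f : ι → Bool => ¬ f a = true ∧ ¬ f b = true), S f := by
    unfold pAB; apply Finset.sum_congr _ (fun _ _ => rfl)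
    apply Finset.filter_congr; intro f _; simp
  rw [e1, e2, e3, e4]
  linarith

lemma prOne_eq_margD {ι C : Type} [Fintype ι] [DecidableEq ι] [DecidableEq C]
    (ctx : ι → C) (D : (c : C) → ({x : ι // ctx x = c} → Bool) → ℝ)
    (S : (ι → Bool) → ℝ) (hM : Matches ctx D S) (a : ι) :
    prOne S a = margD ctx D a := by
  unfold prOne margD
  rw [← Finset.sum_fiberwise_of_maps_to
      (g := fun (f : ι → Bool) (x : {x : ι // ctx x = ctx a}) => f x.1)
      (t := Finset.univ.filter
        (fun u : {x : ι // ctx x = ctx a} → Bool => u ⟨a, rfl⟩ = true))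
      (fun f hf => by
        simp only [Finset.mem_filter, Finset.mem_univ, true_and] at hf ⊢
        exact hf) S]
  apply Finset.sum_congr rfl
  intro u hu
  simp only [Finset.mem_filter, Finset.mem_univ, true_and] at hu
  rw [← hM (ctx a) u]
  apply Finset.sum_congr _ (fun _ _ => rfl)
  rw [Finset.filter_filter]
  apply Finset.filter_congr
  intro f _
  constructor
  · rintro ⟨hfa, hfu⟩ x
    exact congrFun hfu x
  · intro h
    exact ⟨(h ⟨a, rfl⟩).trans hu, funext h⟩

/-- a consistently connected system (all content-sharing
variables have the same marginal Pr[R_q^c = 1]) is noncontextual in the CbD 2.0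
sense (there is a joint distribution matching all context marginals with every
content-sharing pair coupled maximally) if and only if it admits a joint
distribution matching all context marginals in which, for each content, all
content-sharing variables are almost surely equal. -/
theorem consistently_connected_noncontextual_iff {ι C Q : Type} [Fintype ι]
    [DecidableEq ι] [DecidableEq C] (ctx : ι → C) (cnt : ι → Q)
    (D : (c : C) → ({x : ι // ctx x = c} → Bool) → ℝ)
    (hcc : ∀ a b : ι, cnt a = cnt b → margD ctx D a = margD ctx D b) :
    (∃ S : (ι → Bool) → ℝ, (∀ f, 0 ≤ S f) ∧ (∑ f, S f) = 1 ∧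
      Matches ctx D S ∧
      (∀ a b : ι, a ≠ b → cnt a = cnt b →
        prBoth S a b = min (prOne S a) (prOne S b)))
    ↔
    (∃ S : (ι → Bool) → ℝ, (∀ f, 0 ≤ S f) ∧ (∑ f, S f) = 1 ∧
      Matches ctx D S ∧
      (∀ a b : ι, cnt a = cnt b → prEq S a b = 1)) := by
  constructor
  · rintro ⟨S, hpos, hsum, hM, hmin⟩
    refine ⟨S, hpos, hsum, hM, ?_⟩
    intro a b hq
    by_cases hab : a = b
    · subst hab
      unfold prEq
      simpa using hsum
    · have hm := hmin a b hab hq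
      have hone : prOne S a = prOne S b := by
        rw [prOne_eq_margD ctx D S hM a, prOne_eq_margD ctx D S hM b]
        exact hcc a b hq
      have h1 := prOne_split S a b
      have h2 := prOne_split' S a b
      have h3 := prBoth_eq_pAB S a b
      have h4 := prEq_split S a b
      have h5 := total_split S a b
      rw [hsum] at h5
      rw [hone, min_self, h2, h3] at hm
      have hy : pAB S a b true false = pAB S a b false true := by
        rw [h1, h2] at hone; linarith
      linarith
  · rintro ⟨S, hpos, hsum, hM, heq⟩
    refine ⟨S, hpos, hsum, hM, ?_⟩
    intro a b _ hq
    have h0 := heq a b hq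
    have h1 := prOne_split S a b
    have h2 := prOne_split' S a b
    have h3 := prBoth_eq_pAB S a b
    have h4 := prEq_split S a b
    have h5 := total_split S a b
    rw [hsum] at h5
    have ny := pAB_nonneg S hpos a b true false
    have nz := pAB_nonneg S hpos a b false true
    have hy : pAB S a b true false = 0 := by linarith
    have hz : pAB S a b false true = 0 := by linarith
    have hone : prOne S a = prOne S b := by rw [h1, h2, hy, hz]
    rw [hone, min_self]
    rw [h3, h2, hz]
    ring
end

section
/- Existence of quasi-couplings: for any system of binary random variables given by context-wise joint distributions and content-wise multimaximal coupling distributions (over a finite index set of (context,content) pairs), there exists a signed measure (real-valued function summing to 1) on the set of all joint value assignments whose context-marginals match the given context distributions and whose content-marginals match the given multimaximal coupling distributions. -/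
/-!
Let `ν a` be the one-dimensional marginal of variable `a`; by consistency it is the same whether
read off the context distribution or the content distribution. Start from the product `∏ a, ν a`
and, for every context and every content block `B` with distribution `X_B`, add the correction
`(X_B - ν^B) ⊗ ν^(ι \ B)`. Its marginal on `B` itself is `X_B - ν^B`, while its marginal on any set
meeting `B` in at most one point vanishes, because `X_B` and `ν^B` have the same total mass and the
same one-dimensional marginals. Distinct contexts are disjoint, distinct contents are disjoint, and
a context meets a content in at most one point, so the marginal on each block picks up the product
term plus exactly its own correction, which sums to `X_B`.
-/

open Finset

namespace QuasiCoupling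

variable {ι β R : Type*} [Fintype ι] [DecidableEq ι] [Fintype β] [CommRing R]

theorem sum_filter_eq_false {α : Type*} (s : Finset α) (g : α → Bool) (F : α → R) :
    ∑ x ∈ s with g x = false, F x = ∑ x ∈ s, F x - ∑ x ∈ s with g x = true, F x := by
  rw [eq_sub_iff_add_eq, add_comm, ← sum_filter_add_sum_filter_not s (g · = true)]
  simp only [Bool.not_eq_true]

theorem sum_prod_eq_one (ν : ι → β → R) (hν : ∀ a, ∑ b, ν a b = 1) :
    ∑ f : ι → β, ∏ a, ν a (f a) = 1 := by
  rw [← Fintype.prod_sum, Finset.prod_congr rfl fun a _ => hν a, prod_const_one]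

variable [DecidableEq β]

theorem sum_filter_apply_eq_prod (ν : ι → β → R) (hν : ∀ a, ∑ b, ν a b = 1) (a : ι) (b : β) :
    ∑ f ∈ univ.filter (fun f : ι → β => f a = b), ∏ x, ν x (f x) = ν a b := by
  have hpi : univ.filter (fun f : ι → β => f a = b) =
      Fintype.piFinset fun x => if x = a then {b} else univ := by
    ext f
    simp only [mem_filter, mem_univ, true_and, Fintype.mem_piFinset]
    refine ⟨fun h x => ?_, fun h => by simpa using h a⟩
    split_ifs with hx <;> simp [hx, h]
  have hsum : ∀ x, ∑ y ∈ (if x = a then {b} else univ), ν x y = if x = a then ν a b else 1 := by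
    intro x
    split_ifs with hx
    · simp [hx]
    · exact hν x
  rw [hpi, ← prod_univ_sum, prod_congr rfl fun x _ => hsum x, prod_ite_eq', if_pos (mem_univ a)]

def marginal (p : ι → Prop) [DecidablePred p] (F : (ι → β) → R) (v : {x // p x} → β) : R :=
  ∑ f ∈ univ.filter (fun f : ι → β => ∀ x : {x // p x}, f x = v x), F f

section marginal

variable (p : ι → Prop) [DecidablePred p]

theorem marginal_add (F G : (ι → β) → R) (v : {x // p x} → β) :
    marginal p (F + G) v = marginal p F v + marginal p G v :=
  sum_add_distrib

theorem marginal_sub (F G : (ι → β) → R) (v : {x // p x} → β) :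
    marginal p (fun f => F f - G f) v = marginal p F v - marginal p G v :=
  sum_sub_distrib _ _

theorem marginal_sum {κ : Type*} (s : Finset κ) (F : κ → (ι → β) → R) (v : {x // p x} → β) :
    marginal p (∑ k ∈ s, F k) v = ∑ k ∈ s, marginal p (F k) v := by
  simp only [marginal, Finset.sum_apply]
  exact sum_comm

theorem marginal_of_forall_not (hp : ∀ x, ¬ p x) (F : (ι → β) → R) (v : {x // p x} → β) :
    marginal p F v = ∑ f, F f := by
  rw [marginal, filter_true_of_mem fun f _ x => absurd x.2 (hp x.1)]

theorem marginal_of_forall (hp : ∀ x, p x) (F : (ι → β) → R) (v : {x // p x} → β) :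
    marginal p F v = F fun x => v ⟨x, hp x⟩ := by
  have : univ.filter (fun f : ι → β => ∀ x : {x // p x}, f x = v x) = {fun x => v ⟨x, hp x⟩} := by
    ext f
    simp only [mem_filter, mem_univ, true_and, mem_singleton, funext_iff, Subtype.forall]
    exact ⟨fun h x => h x (hp x), fun h x _ => h x⟩
  rw [marginal, this, sum_singleton]

theorem marginal_eq_of_subsingleton (hp : ∀ x y, p x → p y → x = y) {F G : (ι → β) → R}
    (h₀ : ∑ f, F f = ∑ f, G f)
    (h₁ : ∀ a b, ∑ f ∈ univ.filter (fun f : ι → β => f a = b), F f =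
      ∑ f ∈ univ.filter (fun f : ι → β => f a = b), G f)
    (v : {x // p x} → β) :
    marginal p F v = marginal p G v := by
  by_cases hne : ∃ a, p a
  · obtain ⟨a, ha⟩ := hne
    have : univ.filter (fun f : ι → β => ∀ x : {x // p x}, f x = v x) =
        univ.filter (fun f : ι → β => f a = v ⟨a, ha⟩) := by
      ext f
      simp only [mem_filter, mem_univ, true_and, Subtype.forall]
      exact ⟨fun h => h a ha, fun h x hx => by obtain rfl := hp x a hx ha; exact h⟩
    rw [marginal, marginal, this, h₁]
  · push Not at hne
    rw [marginal_of_forall_not p hne, marginal_of_forall_not p hne, h₀]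

end marginal

theorem marginal_prod (p : ι → Prop) [DecidablePred p] (ν : ι → β → R)
    (hν : ∀ a, ∑ b, ν a b = 1) (v : {x // p x} → β) :
    marginal p (fun f => ∏ a, ν a (f a)) v = ∏ x : {x // p x}, ν x (v x) := by
  have hpi : univ.filter (fun f : ι → β => ∀ x : {x // p x}, f x = v x) =
      Fintype.piFinset fun x => if h : p x then {v ⟨x, h⟩} else univ := by
    ext f
    simp only [mem_filter, mem_univ, true_and, Fintype.mem_piFinset]
    refine ⟨fun h x => ?_, fun h x => by simpa [x.2] using h x⟩
    split_ifs with hx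
    · simp [h ⟨x, hx⟩]
    · exact mem_univ _
  have hsum : ∀ x, ∑ y ∈ (if h : p x then {v ⟨x, h⟩} else univ), ν x y =
      if h : p x then ν x (v ⟨x, h⟩) else 1 := by
    intro x
    split_ifs with hx
    · simp
    · exact hν x
  rw [marginal, hpi, ← prod_univ_sum, prod_congr rfl fun x _ => hsum x, Fintype.prod_dite]
  simp

theorem marginal_mul_prod_compl (B p : ι → Prop) [DecidablePred B] [DecidablePred p]
    (G : ({x // B x} → β) → R) (ν : ι → β → R) (hν : ∀ a, ∑ b, ν a b = 1)
    (v : {x // p x} → β) :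
    marginal p (fun f => G (fun x => f x) * ∏ x : {x // ¬ B x}, ν x (f x)) v =
      marginal (fun x : {x // B x} => p x) G (fun x => v ⟨x, x.2⟩) *
        ∏ x : {x : {x // ¬ B x} // p x}, ν x (v ⟨x, x.2⟩) := by
  rw [← marginal_prod (fun x : {x // ¬ B x} => p x) (fun x => ν x) (fun x => hν x),
    marginal, marginal, marginal, sum_mul_sum, ← sum_product']
  refine sum_equiv (Equiv.piEquivPiSubtypeProd B fun _ => β) (fun f => ?_) fun _ _ => rfl
  simp only [mem_filter, mem_univ, true_and, mem_product, Equiv.piEquivPiSubtypeProd_apply,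
    Subtype.forall]
  refine ⟨fun h => ⟨fun x _ hx => h x hx, fun x _ hx => h x hx⟩, fun h x hx => ?_⟩
  by_cases hB : B x
  · exact h.1 x hB hx
  · exact h.2 x hB hx

section blockCorrection

variable (B : ι → Prop) [DecidablePred B] (X : ({x // B x} → β) → R) (ν : ι → β → R)

def blockCorrection (f : ι → β) : R :=
  (X (fun x => f x) - ∏ x : {x // B x}, ν x (f x)) * ∏ x : {x // ¬ B x}, ν x (f x)

theorem marginal_blockCorrection_self (hν : ∀ a, ∑ b, ν a b = 1) (v : {x // B x} → β) :
    marginal B (blockCorrection B X ν) v = X v - ∏ x : {x // B x}, ν x (v x) := by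
  unfold blockCorrection
  rw [marginal_mul_prod_compl B B (fun u => X u - ∏ x : {x // B x}, ν x (u x)) ν hν,
    marginal_of_forall _ fun x => x.2]
  have : IsEmpty {x : {x // ¬ B x} // B x} := ⟨fun x => x.1.2 x.2⟩
  simp only [Fintype.prod_empty, mul_one]

theorem marginal_blockCorrection_eq_zero (hν : ∀ a, ∑ b, ν a b = 1) (hX₁ : ∑ u, X u = 1)
    (hXν : ∀ a b, ∑ u ∈ univ.filter (fun u : {x // B x} → β => u a = b), X u = ν a b)
    (p : ι → Prop) [DecidablePred p] (hp : ∀ x y, B x → B y → p x → p y → x = y)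
    (v : {x // p x} → β) :
    marginal p (blockCorrection B X ν) v = 0 := by
  unfold blockCorrection
  rw [marginal_mul_prod_compl B p (fun u => X u - ∏ x : {x // B x}, ν x (u x)) ν hν,
    marginal_sub, sub_eq_zero.2, zero_mul]
  refine marginal_eq_of_subsingleton _ (fun x y hx hy => Subtype.ext (hp x y x.2 y.2 hx hy)) ?_
    (fun a b => ?_) _
  · rw [hX₁, sum_prod_eq_one (fun x : {x // B x} => ν x) fun x => hν x]
  · rw [hXν, sum_filter_apply_eq_prod (fun x : {x // B x} => ν x) (fun x => hν x)]

end blockCorrection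

def fiberCorrection {κ : Type*} [DecidableEq κ] (g : ι → κ)
    (X : ∀ k, ({x // g x = k} → β) → R) (ν : ι → β → R) : (ι → β) → R :=
  ∑ k ∈ univ.image g, blockCorrection (g · = k) (X k) ν

section fiberCorrection

variable {κ : Type*} [DecidableEq κ] (g : ι → κ) (X : ∀ k, ({x // g x = k} → β) → R)
  (ν : ι → β → R)

theorem marginal_fiberCorrection_fiber (hν : ∀ a, ∑ b, ν a b = 1)
    (hX₁ : ∀ k, ∑ u, X k u = 1)
    (hXν : ∀ k a b, ∑ u ∈ univ.filter (fun u : {x // g x = k} → β => u a = b), X k u = ν a b)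
    (c : κ) (v : {x // g x = c} → β) :
    marginal (g · = c) (fiberCorrection g X ν) v = X c v - ∏ x : {x // g x = c}, ν x (v x) := by
  rw [fiberCorrection, marginal_sum, sum_eq_single c, marginal_blockCorrection_self _ _ _ hν]
  · exact fun k _ hk => marginal_blockCorrection_eq_zero _ _ _ hν (hX₁ k) (hXν k) _
      (fun x _ hx _ hx' _ => absurd (hx.symm.trans hx') hk) v
  · exact fun hc => marginal_blockCorrection_eq_zero _ _ _ hν (hX₁ c) (hXν c) _
      (fun x _ hx _ _ _ => absurd (hx ▸ mem_image_of_mem g (mem_univ x)) hc) v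

theorem marginal_fiberCorrection_eq_zero (hν : ∀ a, ∑ b, ν a b = 1)
    (hX₁ : ∀ k, ∑ u, X k u = 1)
    (hXν : ∀ k a b, ∑ u ∈ univ.filter (fun u : {x // g x = k} → β => u a = b), X k u = ν a b)
    (p : ι → Prop) [DecidablePred p] (hp : ∀ x y, p x → p y → g x = g y → x = y)
    (v : {x // p x} → β) :
    marginal p (fiberCorrection g X ν) v = 0 := by
  rw [fiberCorrection, marginal_sum]
  exact sum_eq_zero fun k _ => marginal_blockCorrection_eq_zero _ _ _ hν (hX₁ k) (hXν k) p
    (fun x y hx hy hpx hpy => hp x y hpx hpy (hx.trans hy.symm)) v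

end fiberCorrection

end QuasiCoupling

open QuasiCoupling

theorem quasi_coupling_exists_general {ι C Q : Type} [Fintype ι] [DecidableEq ι]
    [DecidableEq C] [DecidableEq Q] (ctx : ι → C) (cnt : ι → Q)
    (hinj : ∀ x y : ι, ctx x = ctx y → cnt x = cnt y → x = y)
    (D : (c : C) → ({x : ι // ctx x = c} → Bool) → ℝ)
    (E : (q : Q) → ({x : ι // cnt x = q} → Bool) → ℝ)
    (hD1 : ∀ c : C, (∑ u, D c u) = 1)
    (hE1 : ∀ q : Q, (∑ v, E q v) = 1)
    (hcons : ∀ a : ι,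
      (∑ u ∈ Finset.univ.filter
          (fun u : {x : ι // ctx x = ctx a} → Bool => u ⟨a, rfl⟩ = true),
        D (ctx a) u)
      = ∑ v ∈ Finset.univ.filter
          (fun v : {x : ι // cnt x = cnt a} → Bool => v ⟨a, rfl⟩ = true),
        E (cnt a) v) :
    ∃ Qm : (ι → Bool) → ℝ, (∑ f, Qm f) = 1 ∧
      (∀ (c : C) (u : {x : ι // ctx x = c} → Bool),
        (∑ f ∈ Finset.univ.filter
            (fun f : ι → Bool => ∀ x : {x : ι // ctx x = c}, f x.1 = u x),
          Qm f) = D c u) ∧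
      (∀ (q : Q) (v : {x : ι // cnt x = q} → Bool),
        (∑ f ∈ Finset.univ.filter
            (fun f : ι → Bool => ∀ x : {x : ι // cnt x = q}, f x.1 = v x),
          Qm f) = E q v) := by
  set ν : ι → Bool → ℝ := fun a b =>
    ∑ u ∈ univ.filter (fun u : {x // ctx x = ctx a} → Bool => u ⟨a, rfl⟩ = b), D (ctx a) u
  have hν : ∀ a, ∑ b, ν a b = 1 := fun a => (sum_fiberwise univ _ _).trans (hD1 _)
  have hDν : ∀ c a b, ∑ u ∈ univ.filter (fun u : {x // ctx x = c} → Bool => u a = b), D c u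
      = ν a b := by
    rintro c ⟨a, rfl⟩ b
    rfl
  have hEν : ∀ q a b, ∑ v ∈ univ.filter (fun v : {x // cnt x = q} → Bool => v a = b), E q v
      = ν a b := by
    rintro q ⟨a, rfl⟩ (_ | _)
    · change _ = ∑ u ∈ univ.filter (fun u : {x // ctx x = ctx a} → Bool => u ⟨a, rfl⟩ = false),
        D (ctx a) u
      rw [sum_filter_eq_false, sum_filter_eq_false, hE1, hD1, hcons]
    · exact (hcons a).symm
  have hctx := marginal_fiberCorrection_eq_zero ctx D ν hν hD1 hDν
  have hcnt := marginal_fiberCorrection_eq_zero cnt E ν hν hE1 hEν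
  refine ⟨(fun f => ∏ a, ν a (f a)) + fiberCorrection ctx D ν + fiberCorrection cnt E ν,
    ?_, fun c u => ?_, fun q v => ?_⟩
  · -- the total mass is the marginal on the empty set of coordinates
    rw [← marginal_of_forall_not (fun _ => False) (fun _ => id) _ (fun x => x.2.elim),
      marginal_add, marginal_add, marginal_prod _ _ hν, hctx _ (fun _ _ h => h.elim),
      hcnt _ (fun _ _ h => h.elim)]
    simp
  · change marginal (ctx · = c) _ u = D c u
    rw [marginal_add, marginal_add, marginal_prod _ _ hν,
      marginal_fiberCorrection_fiber ctx D ν hν hD1 hDν,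
      hcnt _ (fun x y hx hy => hinj x y (hx.trans hy.symm))]
    ring
  · change marginal (cnt · = q) _ v = E q v
    rw [marginal_add, marginal_add, marginal_prod _ _ hν,
      marginal_fiberCorrection_fiber cnt E ν hν hE1 hEν,
      hctx _ (fun x y hx hy hxy => hinj x y hxy (hx.trans hy.symm))]
    ring

/-- existence of quasi-couplings. For a system of binary
variables indexed by (context, content) pairs (ι with injective pairing
(ctx, cnt)), given probability distributions D c for each context and E q for
each content (e.g., the multimaximal coupling distributions of the
connections) that agree on the single-variable marginals Pr[R_a = 1], there is
a real-valued function Qm on all joint value assignments summing to 1 (a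
signed quasi-distribution) whose context-marginals are the D c and whose
content-marginals are the E q. -/
theorem quasi_coupling_exists {ι C Q : Type} [Fintype ι] [DecidableEq ι]
    [DecidableEq C] [DecidableEq Q] (ctx : ι → C) (cnt : ι → Q)
    (hinj : ∀ x y : ι, ctx x = ctx y → cnt x = cnt y → x = y)
    (D : (c : C) → ({x : ι // ctx x = c} → Bool) → ℝ)
    (E : (q : Q) → ({x : ι // cnt x = q} → Bool) → ℝ)
    (hD0 : ∀ c u, 0 ≤ D c u) (hD1 : ∀ c : C, (∑ u, D c u) = 1)
    (hE0 : ∀ q v, 0 ≤ E q v) (hE1 : ∀ q : Q, (∑ v, E q v) = 1)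
    (hcons : ∀ a : ι,
      (∑ u ∈ Finset.univ.filter
          (fun u : {x : ι // ctx x = ctx a} → Bool => u ⟨a, rfl⟩ = true),
        D (ctx a) u)
      = ∑ v ∈ Finset.univ.filter
          (fun v : {x : ι // cnt x = cnt a} → Bool => v ⟨a, rfl⟩ = true),
        E (cnt a) v) :
    ∃ Qm : (ι → Bool) → ℝ, (∑ f, Qm f) = 1 ∧
      (∀ (c : C) (u : {x : ι // ctx x = c} → Bool),
        (∑ f ∈ Finset.univ.filter
            (fun f : ι → Bool => ∀ x : {x : ι // ctx x = c}, f x.1 = u x),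
          Qm f) = D c u) ∧
      (∀ (q : Q) (v : {x : ι // cnt x = q} → Bool),
        (∑ f ∈ Finset.univ.filter
            (fun f : ι → Bool => ∀ x : {x : ι // cnt x = q}, f x.1 = v x),
          Qm f) = E q v) :=
  quasi_coupling_exists_general ctx cnt hinj D E hD1 hE1 hcons
end
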